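/- arXiv:1810.03150 — 3 statements merged into one kernel-verified Lean document; each statement's English description precedes it below -/
import Mathlib

section
/- Let N be a quantum channel on d×d complex matrices, γ a positive-definite density matrix with N(γ) positive definite, and R_γ the Petz recovery map. For unit vectors ψ and φ', define the forward transition probability T(ψ→φ') = ⟨φ'| N(|ψ⟩⟨ψ|) |φ'⟩, the rescaled unit vectors ψ̃ = γ^{-1/2}ψ / ⟨ψ|γ^{-1}|ψ⟩^{1/2} and φ̃' = N(γ)^{1/2}φ' / ⟨φ'|N(γ)|φ'⟩^{1/2}, and the backward transition probability T̃(ψ̃←φ̃') = ⟨ψ̃| R_γ(|φ̃'⟩⟨φ̃'|) |ψ̃⟩. Then T(ψ→φ') = T̃(ψ̃←φ̃') · ⟨ψ|γ^{-1}|ψ⟩ · ⟨φ'|N(γ)|φ'⟩. -/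
open Matrix
open scoped ComplexOrder

/-- ⟨v|A|w⟩ -/
noncomputable def braket {d : ℕ} (v : Fin d → ℂ) (A : Matrix (Fin d) (Fin d) ℂ)
    (w : Fin d → ℂ) : ℂ :=
  dotProduct (star v) (A.mulVec w)

/-- |v⟩⟨w| -/
noncomputable def ketbra {d : ℕ} (v w : Fin d → ℂ) : Matrix (Fin d) (Fin d) ℂ :=
  Matrix.vecMulVec v (star w)

/-- A quantum channel in Kraus form: N(X) = ∑ m, K m * X * (K m)ᴴ. -/
noncomputable def krausMap {d : ℕ} {ι : Type} [Fintype ι] (K : ι → Matrix (Fin d) (Fin d) ℂ)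
    (X : Matrix (Fin d) (Fin d) ℂ) : Matrix (Fin d) (Fin d) ℂ :=
  ∑ m, K m * X * (K m)ᴴ

/-- The adjoint map: N†(X) = ∑ m, (K m)ᴴ * X * K m. -/
noncomputable def krausAdj {d : ℕ} {ι : Type} [Fintype ι] (K : ι → Matrix (Fin d) (Fin d) ℂ)
    (X : Matrix (Fin d) (Fin d) ℂ) : Matrix (Fin d) (Fin d) ℂ :=
  ∑ m, (K m)ᴴ * X * K m

/-- Functional calculus of a Hermitian matrix, via its spectral decomposition
(junk value `0` on non-Hermitian matrices). -/
noncomputable def mfun {n : Type} [Fintype n] [DecidableEq n] (f : ℝ → ℂ)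
    (M : Matrix n n ℂ) : Matrix n n ℂ :=
  if h : M.IsHermitian then
    (h.eigenvectorUnitary : Matrix n n ℂ) *
      Matrix.diagonal (fun i => f (h.eigenvalues i)) *
      star (h.eigenvectorUnitary : Matrix n n ℂ)
  else 0

/-- Complex matrix power A^z = exp (z log A) of a positive-definite matrix,
defined via its spectral decomposition. -/
noncomputable def mpow {n : Type} [Fintype n] [DecidableEq n]
    (M : Matrix n n ℂ) (z : ℂ) : Matrix n n ℂ :=
  mfun (fun r => (r : ℂ) ^ z) M

/-- The Petz recovery map R_γ(X) = γ^{1/2} N†(N(γ)^{-1/2} X N(γ)^{-1/2}) γ^{1/2}. -/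
noncomputable def petz {d : ℕ} {ι : Type} [Fintype ι] (K : ι → Matrix (Fin d) (Fin d) ℂ)
    (γ : Matrix (Fin d) (Fin d) ℂ) (X : Matrix (Fin d) (Fin d) ℂ) :
    Matrix (Fin d) (Fin d) ℂ :=
  mpow γ (1/2) * krausAdj K (mpow (krausMap K γ) (-(1/2)) * X * mpow (krausMap K γ) (-(1/2))) *
    mpow γ (1/2)

/-- The reference-rescaled initial state ψ̃ = γ^{-1/2} ψ / ⟨ψ|γ⁻¹|ψ⟩^{1/2}. -/
noncomputable def rescaleIn {d : ℕ} (γ : Matrix (Fin d) (Fin d) ℂ) (ψ : Fin d → ℂ) :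
    Fin d → ℂ :=
  (braket ψ (mpow γ (-1)) ψ) ^ (-(1/2) : ℂ) • (mpow γ (-(1/2))).mulVec ψ

/-- The reference-rescaled final state φ̃' = N(γ)^{1/2} φ' / ⟨φ'|N(γ)|φ'⟩^{1/2}. -/
noncomputable def rescaleOut {d : ℕ} {ι : Type} [Fintype ι] (K : ι → Matrix (Fin d) (Fin d) ℂ)
    (γ : Matrix (Fin d) (Fin d) ℂ) (φ : Fin d → ℂ) : Fin d → ℂ :=
  (braket φ (krausMap K γ) φ) ^ (-(1/2) : ℂ) • (mpow (krausMap K γ) (1/2)).mulVec φ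

/-!
With x = γ^{-1/2} ψ and y = N(γ)^{1/2} φ', the outer factors γ^{1/2} and the inner factors
N(γ)^{-1/2} of the Petz map exactly undo these rescalings, so
⟨x| R_γ(|y⟩⟨y|) |x⟩ = ⟨ψ| N†(|φ'⟩⟨φ'|) |ψ⟩ = ⟨φ'| N(|ψ⟩⟨ψ|) |φ'⟩.
Normalising x and y divides this by ⟨ψ|γ⁻¹|ψ⟩ and ⟨φ'|N(γ)|φ'⟩, which are positive because
γ⁻¹ and N(γ) are positive definite.
-/

section FunctionalCalculus

variable {n : Type} [Fintype n] [DecidableEq n] {M : Matrix n n ℂ}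

lemma mfun_mul_mfun (hM : M.IsHermitian) (f g : ℝ → ℂ) :
    mfun f M * mfun g M = mfun (fun r => f r * g r) M := by
  set U : Matrix n n ℂ := (hM.eigenvectorUnitary : Matrix n n ℂ)
  have hU : star U * U = 1 := Unitary.coe_star_mul_self _
  simp only [mfun, dif_pos hM]
  calc U * diagonal (fun i => f (hM.eigenvalues i)) * star U *
        (U * diagonal (fun i => g (hM.eigenvalues i)) * star U)
      = U * (diagonal (fun i => f (hM.eigenvalues i)) * (star U * U) *
        diagonal (fun i => g (hM.eigenvalues i))) * star U := by
        simp only [Matrix.mul_assoc]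
    _ = _ := by rw [hU, Matrix.mul_one, diagonal_mul_diagonal]

lemma mfun_congr (hM : M.IsHermitian) {f g : ℝ → ℂ}
    (hfg : ∀ i, f (hM.eigenvalues i) = g (hM.eigenvalues i)) : mfun f M = mfun g M := by
  simp only [mfun, dif_pos hM, hfg]

lemma posDef_mfun (hM : M.IsHermitian) {f : ℝ → ℂ} (hf : ∀ i, 0 < f (hM.eigenvalues i)) :
    (mfun f M).PosDef := by
  rw [mfun, dif_pos hM]
  exact (IsUnit.posDef_star_right_conjugate_iff Unitary.isUnit_coe).mpr (.diagonal hf)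

lemma mpow_zero (hM : M.IsHermitian) : mpow M 0 = 1 := by
  simp only [mpow, mfun, dif_pos hM, Complex.cpow_zero, diagonal_one, Matrix.mul_one]
  exact Unitary.coe_mul_star_self _

lemma mpow_mul_mpow (hM : M.PosDef) (z w : ℂ) : mpow M z * mpow M w = mpow M (z + w) := by
  rw [mpow, mpow, mpow, mfun_mul_mfun hM.1]
  refine mfun_congr hM.1 fun i => ?_
  exact (Complex.cpow_add _ _ (mod_cast (hM.eigenvalues_pos i).ne')).symm

lemma mpow_mul_mpow_neg (hM : M.PosDef) (z : ℂ) : mpow M z * mpow M (-z) = 1 := by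
  rw [mpow_mul_mpow hM, add_neg_cancel, mpow_zero hM.1]

lemma posDef_mpow (hM : M.PosDef) (r : ℝ) : (mpow M r).PosDef := by
  refine posDef_mfun hM.1 fun i => ?_
  rw [← Complex.ofReal_cpow (hM.eigenvalues_pos i).le]
  exact_mod_cast Real.rpow_pos_of_pos (hM.eigenvalues_pos i) r

end FunctionalCalculus

section BraKet

variable {d : ℕ}

lemma braket_sum {ι : Type} [Fintype ι] (v : Fin d → ℂ) (A : ι → Matrix (Fin d) (Fin d) ℂ)
    (w : Fin d → ℂ) : braket v (∑ m, A m) w = ∑ m, braket v (A m) w := by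
  simp only [braket, sum_mulVec, dotProduct_sum]

lemma braket_smul (v : Fin d → ℂ) (c : ℂ) (M : Matrix (Fin d) (Fin d) ℂ) (w : Fin d → ℂ) :
    braket v (c • M) w = c * braket v M w := by
  simp only [braket, smul_mulVec, dotProduct_smul, smul_eq_mul]

lemma smul_braket_smul (c : ℂ) (v : Fin d → ℂ) (M : Matrix (Fin d) (Fin d) ℂ) :
    braket (c • v) M (c • v) = star c * c * braket v M v := by
  simp only [braket, star_smul, smul_dotProduct, mulVec_smul, dotProduct_smul, smul_eq_mul]
  ring

lemma braket_conjTranspose_mul_mul (A M : Matrix (Fin d) (Fin d) ℂ) (v w : Fin d → ℂ) :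
    braket v (Aᴴ * M * A) w = braket (A *ᵥ v) M (A *ᵥ w) := by
  simp only [braket, ← mulVec_mulVec, dotProduct_mulVec, star_mulVec]

lemma braket_ketbra (u p q w : Fin d → ℂ) :
    braket u (ketbra p q) w = (star u ⬝ᵥ p) * (star q ⬝ᵥ w) := by
  simp only [braket, ketbra, vecMulVec_mulVec, dotProduct_smul, op_smul_eq_mul]

lemma ketbra_smul_smul (c : ℂ) (v : Fin d → ℂ) :
    ketbra (c • v) (c • v) = (star c * c) • ketbra v v := by
  simp only [ketbra, star_smul, smul_vecMulVec, vecMulVec_smul, smul_smul]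

lemma mul_ketbra_mul_conjTranspose (A B : Matrix (Fin d) (Fin d) ℂ) (v w : Fin d → ℂ) :
    A * ketbra v w * Bᴴ = ketbra (A *ᵥ v) (B *ᵥ w) := by
  rw [ketbra, ketbra, mul_vecMulVec, vecMulVec_mul, star_mulVec]

end BraKet

section Channel

variable {d : ℕ} {ι : Type} [Fintype ι] (K : ι → Matrix (Fin d) (Fin d) ℂ)

/-- Both sides equal `∑ m, |⟨φ|K m|ψ⟩|²`. -/
lemma braket_krausAdj_ketbra_self (ψ φ : Fin d → ℂ) :
    braket ψ (krausAdj K (ketbra φ φ)) ψ = braket φ (krausMap K (ketbra ψ ψ)) φ := by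
  simp only [krausAdj, krausMap, braket_sum]
  refine Finset.sum_congr rfl fun m _ => ?_
  have hAdj : (K m)ᴴ * ketbra φ φ * K m = ketbra ((K m)ᴴ *ᵥ φ) ((K m)ᴴ *ᵥ φ) := by
    simpa using mul_ketbra_mul_conjTranspose (K m)ᴴ (K m)ᴴ φ φ
  rw [hAdj, mul_ketbra_mul_conjTranspose, braket_ketbra, braket_ketbra]
  simp only [dotProduct_mulVec, star_mulVec, conjTranspose_conjTranspose]
  ring

lemma petz_smul (γ : Matrix (Fin d) (Fin d) ℂ) (c : ℂ) (X : Matrix (Fin d) (Fin d) ℂ) :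
    petz K γ (c • X) = c • petz K γ X := by
  simp only [petz, krausAdj, Matrix.mul_smul, Matrix.smul_mul, ← Finset.smul_sum]

lemma braket_petz_ketbra {γ : Matrix (Fin d) (Fin d) ℂ} (hγ : γ.PosDef)
    (hNγ : (krausMap K γ).PosDef) (ψ φ : Fin d → ℂ) :
    braket (mpow γ (-(1/2)) *ᵥ ψ)
        (petz K γ (ketbra (mpow (krausMap K γ) (1/2) *ᵥ φ) (mpow (krausMap K γ) (1/2) *ᵥ φ)))
        (mpow γ (-(1/2)) *ᵥ ψ) =
      braket φ (krausMap K (ketbra ψ ψ)) φ := by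
  have hγ_half : (mpow γ (1/2))ᴴ = mpow γ (1/2) := by
    simpa using (posDef_mpow hγ (1/2)).isHermitian.eq
  have hNγ_neg_half : (mpow (krausMap K γ) (-(1/2)))ᴴ = mpow (krausMap K γ) (-(1/2)) := by
    simpa using (posDef_mpow hNγ (-(1/2))).isHermitian.eq
  have hψ : mpow γ (1/2) *ᵥ (mpow γ (-(1/2)) *ᵥ ψ) = ψ := by
    rw [mulVec_mulVec, mpow_mul_mpow_neg hγ, one_mulVec]
  have hφ : mpow (krausMap K γ) (-(1/2)) *ᵥ (mpow (krausMap K γ) (1/2) *ᵥ φ) = φ := by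
    have h : mpow (krausMap K γ) (-(1/2)) * mpow (krausMap K γ) (1/2) = 1 := by
      simpa using mpow_mul_mpow_neg hNγ (-(1/2))
    rw [mulVec_mulVec, h, one_mulVec]
  rw [petz, ← hNγ_neg_half, mul_ketbra_mul_conjTranspose, hNγ_neg_half, hφ]
  nth_rw 1 [← hγ_half]
  rw [braket_conjTranspose_mul_mul, hψ, braket_krausAdj_ketbra_self]

end Channel

lemma star_cpow_neg_half_mul_self {t : ℂ} (ht : 0 < t) :
    star (t ^ (-(1/2) : ℂ)) * t ^ (-(1/2) : ℂ) = t⁻¹ := by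
  obtain ⟨hr, him⟩ := Complex.pos_iff.mp ht
  obtain ⟨r, rfl⟩ : ∃ r : ℝ, (r : ℂ) = t := ⟨t.re, Complex.ext rfl him⟩
  rw [Complex.ofReal_re] at hr
  have h : (r : ℂ) ^ (-(1/2) : ℂ) = ((r ^ (-(1/2) : ℝ) : ℝ) : ℂ) := by
    rw [Complex.ofReal_cpow hr.le]
    norm_num
  rw [h, Complex.star_def, Complex.conj_ofReal, ← Complex.ofReal_mul, ← Real.rpow_add hr]
  norm_num [Real.rpow_neg_one]

theorem pure_state_detailed_balance_general
    {d : ℕ} {ι : Type} [Fintype ι] (K : ι → Matrix (Fin d) (Fin d) ℂ)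
    (γ : Matrix (Fin d) (Fin d) ℂ) (hγ : γ.PosDef)
    (hNγ : (krausMap K γ).PosDef)
    (ψ φ : Fin d → ℂ) (hψ : dotProduct (star ψ) ψ = 1)
    (hφ : dotProduct (star φ) φ = 1) :
    braket φ (krausMap K (ketbra ψ ψ)) φ =
      braket (rescaleIn γ ψ) (petz K γ (ketbra (rescaleOut K γ φ) (rescaleOut K γ φ)))
          (rescaleIn γ ψ) *
        braket ψ (mpow γ (-1)) ψ * braket φ (krausMap K γ) φ := by
  have hψ0 : ψ ≠ 0 := by rintro rfl; simp at hψ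
  have hφ0 : φ ≠ 0 := by rintro rfl; simp at hφ
  have ha : 0 < braket ψ (mpow γ (-1)) ψ := by
    simpa [braket] using (posDef_mpow hγ (-1)).dotProduct_mulVec_pos hψ0
  have hb : 0 < braket φ (krausMap K γ) φ := hNγ.dotProduct_mulVec_pos hφ0
  simp only [rescaleIn, rescaleOut, ketbra_smul_smul, petz_smul, smul_braket_smul, braket_smul,
    braket_petz_ketbra K hγ hNγ, star_cpow_neg_half_mul_self ha, star_cpow_neg_half_mul_self hb]
  field_simp

/-- detailed balance condition for pure states,
T(ψ→φ') = T̃(ψ̃←φ̃') ⟨ψ|γ⁻¹|ψ⟩ ⟨φ'|N(γ)|φ'⟩. -/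
theorem pure_state_detailed_balance
    {d : ℕ} {ι : Type} [Fintype ι] (K : ι → Matrix (Fin d) (Fin d) ℂ)
    (hK : ∑ m, (K m)ᴴ * K m = 1)
    (γ : Matrix (Fin d) (Fin d) ℂ) (hγ : γ.PosDef) (hγtr : γ.trace = 1)
    (hNγ : (krausMap K γ).PosDef)
    (ψ φ : Fin d → ℂ) (hψ : dotProduct (star ψ) ψ = 1)
    (hφ : dotProduct (star φ) φ = 1) :
    braket φ (krausMap K (ketbra ψ ψ)) φ =
      braket (rescaleIn γ ψ) (petz K γ (ketbra (rescaleOut K γ φ) (rescaleOut K γ φ)))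
          (rescaleIn γ ψ) *
        braket ψ (mpow γ (-1)) ψ * braket φ (krausMap K γ) φ :=
  pure_state_detailed_balance_general K γ hγ hNγ ψ φ hψ hφ
end

section
/- Let H be a Hermitian d×d complex matrix, β > 0, and ψ, φ' unit vectors in ℂ^d. Set ΔE = ⟨φ'|H|φ'⟩ − ⟨ψ|H|ψ⟩ and Υ = e^{βΔE} · ⟨ψ| exp(βH) |ψ⟩ · ⟨φ'| exp(−βH) |φ'⟩. Then Υ ≥ 1, and Υ = 1 if and only if both ψ and φ' are eigenvectors of H (i.e., neither state contains coherence in the energy eigenbasis). -/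
open Matrix
open scoped ComplexOrder

/-!
Diagonalising `H`, a unit vector `v` becomes a probability distribution `pᵢ = |⟨eᵢ|v⟩|²` on the
spectrum, and `⟨v|f(H)|v⟩ = ∑ pᵢ f(λᵢ)`. Hence
`Υ = (⟨ψ|e^{βH}|ψ⟩ / e^{β⟨H⟩_ψ}) · (⟨φ'|e^{-βH}|φ'⟩ / e^{-β⟨H⟩_φ'})`, and each factor is at least
`1` by Jensen's inequality for the strictly convex `exp`, with equality iff the distribution is
concentrated on a single eigenvalue, i.e. iff the vector is an eigenvector.
-/

theorem mul_eq_one_iff_of_one_le_of_one_le {α : Type*} [Semiring α] [PartialOrder α]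
    [IsOrderedRing α] {x y : α} (hx : 1 ≤ x) (hy : 1 ≤ y) : x * y = 1 ↔ x = 1 ∧ y = 1 := by
  refine ⟨fun h => ⟨?_, ?_⟩, fun h => by rw [h.1, h.2, one_mul]⟩
  · exact le_antisymm (h ▸ le_mul_of_one_le_right (zero_le_one.trans hx) hy) hx
  · exact le_antisymm (h ▸ le_mul_of_one_le_left (zero_le_one.trans hy) hx) hy

theorem dotProduct_conj_diagonal_mulVec {n : Type*} [Fintype n] [DecidableEq n]
    (U : Matrix n n ℂ) (g : n → ℂ) (v : n → ℂ) :
    star v ⬝ᵥ ((U * diagonal g * star U) *ᵥ v) = ∑ i, g i * Complex.normSq ((star U *ᵥ v) i) := by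
  have h : star v ᵥ* U = star (star U *ᵥ v) := by
    rw [star_mulVec, ← star_eq_conjTranspose, star_star]
  rw [← mulVec_mulVec, ← mulVec_mulVec, dotProduct_mulVec, h]
  simp only [dotProduct, mulVec_diagonal, Pi.star_apply, Complex.star_def,
    Complex.normSq_eq_conj_mul_self]
  exact Finset.sum_congr rfl fun i _ => by ring

namespace Matrix.IsHermitian

variable {n : Type} [Fintype n] [DecidableEq n] {H : Matrix n n ℂ} (hH : H.IsHermitian)

noncomputable def spectralWeight (v : n → ℂ) (i : n) : ℝ :=
  Complex.normSq ((star (hH.eigenvectorUnitary : Matrix n n ℂ) *ᵥ v) i)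

noncomputable def expectation (v : n → ℂ) (f : ℝ → ℝ) : ℝ :=
  ∑ i, hH.spectralWeight v i * f (hH.eigenvalues i)

theorem spectralWeight_nonneg (v : n → ℂ) (i : n) : 0 ≤ hH.spectralWeight v i :=
  Complex.normSq_nonneg _

theorem sum_spectralWeight {v : n → ℂ} (hv : star v ⬝ᵥ v = 1) :
    ∑ i, hH.spectralWeight v i = 1 := by
  have h := dotProduct_conj_diagonal_mulVec (hH.eigenvectorUnitary : Matrix n n ℂ) (fun _ => 1) v
  rw [diagonal_one, mul_one, Unitary.mul_star_self_of_mem hH.eigenvectorUnitary.2, one_mulVec,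
    hv] at h
  simp only [one_mul] at h
  exact_mod_cast h.symm

theorem dotProduct_mfun_mulVec (f : ℝ → ℝ) (v : n → ℂ) :
    star v ⬝ᵥ (mfun (fun r => (f r : ℂ)) H *ᵥ v) = hH.expectation v f := by
  rw [mfun, dif_pos hH, dotProduct_conj_diagonal_mulVec, expectation]
  push_cast
  exact Finset.sum_congr rfl fun i _ => mul_comm _ _

theorem mfun_ofReal (hH : H.IsHermitian) : mfun (fun r => (r : ℂ)) H = H := by
  conv_rhs => rw [hH.spectral_theorem, Unitary.conjStarAlgAut_apply]
  rw [mfun, dif_pos hH]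
  rfl

theorem dotProduct_mulVec_eq_expectation (v : n → ℂ) :
    star v ⬝ᵥ (H *ᵥ v) = hH.expectation v id := by
  conv_lhs => rw [← hH.mfun_ofReal]
  exact hH.dotProduct_mfun_mulVec id v

theorem mulVec_eq_smul_iff (v : n → ℂ) (c : ℝ) :
    H *ᵥ v = (c : ℂ) • v ↔ ∀ i, hH.spectralWeight v i ≠ 0 → hH.eigenvalues i = c := by
  set U : Matrix n n ℂ := (hH.eigenvectorUnitary : Matrix n n ℂ)
  set D : Matrix n n ℂ := diagonal (RCLike.ofReal ∘ hH.eigenvalues)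
  have hUU : U * star U = 1 := Unitary.mul_star_self_of_mem hH.eigenvectorUnitary.2
  have hUH : star U * H = D * star U := by
    conv_lhs => rw [hH.spectral_theorem, Unitary.conjStarAlgAut_apply]
    rw [← mul_assoc, ← mul_assoc, Unitary.star_mul_self_of_mem hH.eigenvectorUnitary.2, one_mul]
  have hinj : Function.Injective (star U *ᵥ ·) := fun w w' h => by
    simpa only [mulVec_mulVec, hUU, one_mulVec] using congrArg (U *ᵥ ·) h
  rw [← hinj.eq_iff, mulVec_mulVec, hUH, ← mulVec_mulVec, mulVec_smul, funext_iff]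
  refine forall_congr' fun i => ?_
  rw [mulVec_diagonal, Pi.smul_apply, smul_eq_mul, Function.comp_apply, spectralWeight, ne_eq,
    Complex.normSq_eq_zero, mul_eq_mul_right_iff, or_iff_not_imp_right]
  exact imp_congr_right fun _ => Complex.ofReal_inj

theorem exists_mulVec_eq_smul_iff (v : n → ℂ) :
    (∃ c : ℝ, H *ᵥ v = (c : ℂ) • v) ↔
      ∀ j, hH.spectralWeight v j ≠ 0 → ∀ k, hH.spectralWeight v k ≠ 0 →
        hH.eigenvalues j = hH.eigenvalues k := by
  simp_rw [hH.mulVec_eq_smul_iff]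
  refine ⟨fun ⟨c, hc⟩ j hj k hk => (hc j hj).trans (hc k hk).symm, fun h => ?_⟩
  by_cases hv : ∃ j, hH.spectralWeight v j ≠ 0
  · obtain ⟨j, hj⟩ := hv
    exact ⟨hH.eigenvalues j, fun k hk => h k hk j hj⟩
  · exact ⟨0, fun k hk => absurd ⟨k, hk⟩ hv⟩

theorem exp_mul_expectation_le {v : n → ℂ} (hv : star v ⬝ᵥ v = 1) (s : ℝ) :
    Real.exp (s * hH.expectation v id) ≤ hH.expectation v (fun r => Real.exp (s * r)) := by
  have h := convexOn_exp.map_sum_le (t := Finset.univ) (p := fun i => s * hH.eigenvalues i)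
    (fun i _ => hH.spectralWeight_nonneg v i) (hH.sum_spectralWeight hv) (fun _ _ => trivial)
  simpa only [expectation, id, Finset.mul_sum, smul_eq_mul, mul_left_comm s] using h

theorem exp_mul_expectation_eq_iff {v : n → ℂ} (hv : star v ⬝ᵥ v = 1) {s : ℝ} (hs : s ≠ 0) :
    Real.exp (s * hH.expectation v id) = hH.expectation v (fun r => Real.exp (s * r)) ↔
      ∃ c : ℝ, H *ᵥ v = (c : ℂ) • v := by
  have h := strictConvexOn_exp.map_sum_eq_iff_of_nonneg (t := Finset.univ)
    (p := fun i => s * hH.eigenvalues i)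
    (fun i _ => hH.spectralWeight_nonneg v i) (hH.sum_spectralWeight hv) (fun _ _ => trivial)
  simp only [smul_eq_mul, Finset.mem_univ, true_implies, mul_right_inj' hs] at h
  rw [hH.exists_mulVec_eq_smul_iff, ← h]
  simp only [expectation, id, Finset.mul_sum, mul_left_comm s]

end Matrix.IsHermitian

/-- the quantum correction factor
Υ = e^{βΔE} ⟨ψ|e^{βH}|ψ⟩ ⟨φ'|e^{−βH}|φ'⟩ satisfies Υ ≥ 1, with equality iff
both ψ and φ' are eigenvectors of H. -/
theorem quantum_correction_factor_ge_one
    {d : ℕ} (H : Matrix (Fin d) (Fin d) ℂ) (hH : H.IsHermitian)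
    (β : ℝ) (hβ : 0 < β)
    (ψ φ : Fin d → ℂ) (hψ : dotProduct (star ψ) ψ = 1)
    (hφ : dotProduct (star φ) φ = 1) :
    ∀ ΔE : ℝ, ΔE = (braket φ H φ).re - (braket ψ H ψ).re →
    ∀ Υ : ℂ, Υ = Complex.exp (β * ΔE) * braket ψ (mfun (fun r => Real.exp (β * r)) H) ψ *
        braket φ (mfun (fun r => Real.exp (-β * r)) H) φ →
      (Υ.im = 0 ∧ 1 ≤ Υ.re) ∧
      (Υ = 1 ↔ ((∃ c : ℝ, H.mulVec ψ = (c : ℂ) • ψ) ∧ (∃ c : ℝ, H.mulVec φ = (c : ℂ) • φ))) := by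
  intro ΔE hΔE Υ hΥ
  set Eψ := hH.expectation ψ id
  set Eφ := hH.expectation φ id
  set A := hH.expectation ψ fun r => Real.exp (β * r)
  set B := hH.expectation φ fun r => Real.exp (-β * r)
  have hΔE' : ΔE = Eφ - Eψ := by
    simpa only [braket, hH.dotProduct_mulVec_eq_expectation, Complex.ofReal_re] using hΔE
  have hΥ' : Υ = ((A / Real.exp (β * Eψ) * (B / Real.exp (-β * Eφ)) : ℝ) : ℂ) := by
    have h : Real.exp (β * ΔE) * A * B = A / Real.exp (β * Eψ) * (B / Real.exp (-β * Eφ)) := by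
      rw [hΔE', mul_sub, Real.exp_sub, neg_mul, Real.exp_neg]
      field_simp
    rw [hΥ, ← h]
    simp only [braket, hH.dotProduct_mfun_mulVec]
    push_cast
    rfl
  have hA : 1 ≤ A / Real.exp (β * Eψ) :=
    (one_le_div (Real.exp_pos _)).mpr (hH.exp_mul_expectation_le hψ β)
  have hB : 1 ≤ B / Real.exp (-β * Eφ) :=
    (one_le_div (Real.exp_pos _)).mpr (hH.exp_mul_expectation_le hφ (-β))
  rw [hΥ', Complex.ofReal_im, Complex.ofReal_re, Complex.ofReal_eq_one,
    mul_eq_one_iff_of_one_le_of_one_le hA hB, div_eq_one_iff_eq (Real.exp_pos _).ne',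
    div_eq_one_iff_eq (Real.exp_pos _).ne']
  exact ⟨⟨rfl, one_le_mul_of_one_le_of_one_le hA hB⟩,
    and_congr (eq_comm.trans (hH.exp_mul_expectation_eq_iff hψ hβ.ne'))
      (eq_comm.trans (hH.exp_mul_expectation_eq_iff hφ (neg_ne_zero.mpr hβ.ne')))⟩
end

section
/- Let N be a quantum channel on d×d complex matrices, γ a positive-definite density matrix with N(γ) positive definite, and ρ a density matrix, with eigenbases and two-point-measurement quasi-probability P^{μ,ν}_{ij,k'l'} = p_μ ⟨φ'_ν| Π_{k'} N(Π_i |ψ_μ⟩⟨ψ_μ| Π_j) Π_{l'} |φ'_ν⟩ as above. Then for all indices, P^{μ,ν}_{ij,k'l'} = conj(P^{μ,ν}_{ji,l'k'}). Consequently, for every real number s, the sum of P^{μ,ν}_{ij,k'l'} over all tuples (μ,i,j,ν,k',l') whose real entropy production (log p_μ − log p'_ν) − (1/2)log(r_i r_j/(r'_{k'} r'_{l'})) equals s, is a real number. -/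
open Matrix
open scoped ComplexOrder

/-- An orthonormal family of vectors in ℂ^d. -/
def IsONB {d : ℕ} (e : Fin d → Fin d → ℂ) : Prop :=
  ∀ i j, dotProduct (star (e i)) (e j) = if i = j then 1 else 0

/-- For A = ∑ i, r i • |e i⟩⟨e i| with `e` orthonormal and `r` positive, the complex
matrix power A^z = exp (z log A) is given by A^z = ∑ i, (r i)^z • |e i⟩⟨e i|. -/
noncomputable def projPow {d : ℕ} (r : Fin d → ℝ) (e : Fin d → Fin d → ℂ) (z : ℂ) :
    Matrix (Fin d) (Fin d) ℂ :=
  ∑ i, ((r i : ℂ) ^ z) • ketbra (e i) (e i)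

/-- The two-point-measurement quasi-probability
P^{μ,ν}_{ij,k'l'} = p_μ ⟨φ'_ν| Π_{k'} N(Π_i |ψ_μ⟩⟨ψ_μ| Π_j) Π_{l'} |φ'_ν⟩. -/
noncomputable def tpmP {d : ℕ} {ι : Type} [Fintype ι] (K : ι → Matrix (Fin d) (Fin d) ℂ)
    (p : Fin d → ℝ) (ψ : Fin d → Fin d → ℂ) (φ : Fin d → Fin d → ℂ)
    (e : Fin d → Fin d → ℂ) (f : Fin d → Fin d → ℂ)
    (μ ν i j k l : Fin d) : ℂ :=
  (p μ : ℂ) *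
    braket (φ ν)
      (ketbra (f k) (f k) *
        krausMap K (ketbra (e i) (e i) * ketbra (ψ μ) (ψ μ) * ketbra (e j) (e j)) *
        ketbra (f l) (f l))
      (φ ν)

/-! A Kraus map preserves Hermitian conjugation, so conjugating `P^{μ,ν}_{ij,k'l'}` swaps
`i ↔ j` and `k' ↔ l'`. The entropy-production condition is invariant under that swap, hence the
level-set sum is fixed by complex conjugation. -/

lemma ketbra_conjTranspose {d : ℕ} (v w : Fin d → ℂ) : (ketbra v w)ᴴ = ketbra w v := by
  simp [ketbra, conjTranspose_vecMulVec]

lemma krausMap_conjTranspose {d : ℕ} {ι : Type} [Fintype ι] (K : ι → Matrix (Fin d) (Fin d) ℂ)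
    (X : Matrix (Fin d) (Fin d) ℂ) : (krausMap K X)ᴴ = krausMap K Xᴴ := by
  simp [krausMap, conjTranspose_sum, Matrix.mul_assoc]

lemma star_braket {d : ℕ} (v : Fin d → ℂ) (A : Matrix (Fin d) (Fin d) ℂ) (w : Fin d → ℂ) :
    star (braket v A w) = braket w Aᴴ v := by
  rw [braket, braket, star_dotProduct, star_star, star_mulVec,
    dotProduct_mulVec, dotProduct_comm]

lemma tpmP_eq_conj_tpmP_swap {d : ℕ} {ι : Type} [Fintype ι] (K : ι → Matrix (Fin d) (Fin d) ℂ)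
    (p : Fin d → ℝ) (ψ φ e f : Fin d → Fin d → ℂ) (μ ν i j k l : Fin d) :
    tpmP K p ψ φ e f μ ν i j k l = starRingEnd ℂ (tpmP K p ψ φ e f μ ν j i l k) := by
  rw [tpmP, tpmP, map_mul, Complex.conj_ofReal, starRingEnd_apply, star_braket]
  simp only [conjTranspose_mul, krausMap_conjTranspose, ketbra_conjTranspose, Matrix.mul_assoc]

lemma im_sum_eq_zero_of_conj_swap {α β : Type*} [Fintype α] [Fintype β]
    (G : α → α → β → β → ℂ) (hG : ∀ i j k l, G i j k l = starRingEnd ℂ (G j i l k)) :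
    (∑ i, ∑ j, ∑ k, ∑ l, G i j k l).im = 0 := by
  rw [← Complex.conj_eq_iff_im]
  simp only [map_sum, fun i j k l => (hG j i l k).symm]
  rw [Finset.sum_comm]
  exact Finset.sum_congr rfl fun i _ => Finset.sum_congr rfl fun j _ => Finset.sum_comm

theorem tpm_quasiprobability_conjugation_symmetry_general
    {d : ℕ} {ι : Type} [Fintype ι] (K : ι → Matrix (Fin d) (Fin d) ℂ)
    (r : Fin d → ℝ) (e : Fin d → Fin d → ℂ)
    (r' : Fin d → ℝ) (f : Fin d → Fin d → ℂ)
    (p : Fin d → ℝ) (ψ : Fin d → Fin d → ℂ)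
    (p' : Fin d → ℝ) (φ : Fin d → Fin d → ℂ) :
    (∀ μ ν i j k l,
      tpmP K p ψ φ e f μ ν i j k l = (starRingEnd ℂ) (tpmP K p ψ φ e f μ ν j i l k)) ∧
    ((∀ μ, 0 < p μ) → (∀ ν, 0 < p' ν) → ∀ s : ℝ,
      (∑ μ, ∑ ν, ∑ i, ∑ j, ∑ k, ∑ l,
        if (Real.log (p μ) - Real.log (p' ν)) -
            1/2 * Real.log (r i * r j / (r' k * r' l)) = s then
          tpmP K p ψ φ e f μ ν i j k l
        else 0).im = 0) := by
  refine ⟨tpmP_eq_conj_tpmP_swap K p ψ φ e f, fun _ _ s => ?_⟩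
  rw [Complex.im_sum]
  refine Finset.sum_eq_zero fun μ _ => ?_
  rw [Complex.im_sum]
  refine Finset.sum_eq_zero fun ν _ => ?_
  refine im_sum_eq_zero_of_conj_swap _ fun i j k l => ?_
  rw [mul_comm (r j), mul_comm (r' l), apply_ite (starRingEnd ℂ), map_zero,
    ← tpmP_eq_conj_tpmP_swap]

/-- P^{μ,ν}_{ij,k'l'} = conj(P^{μ,ν}_{ji,l'k'}); consequently, for each real s
the sum of the quasi-probability over tuples with real entropy production equal to s is real. -/
theorem tpm_quasiprobability_conjugation_symmetry
    {d : ℕ} {ι : Type} [Fintype ι] (K : ι → Matrix (Fin d) (Fin d) ℂ)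
    (hK : ∑ m, (K m)ᴴ * K m = 1)
    (r : Fin d → ℝ) (e : Fin d → Fin d → ℂ) (hr : ∀ i, 0 < r i) (he : IsONB e)
    (hrtr : ∑ i, r i = 1)
    (r' : Fin d → ℝ) (f : Fin d → Fin d → ℂ) (hr' : ∀ k, 0 < r' k) (hf : IsONB f)
    (hNγ : krausMap K (∑ i, ((r i : ℂ)) • ketbra (e i) (e i)) =
      ∑ k, ((r' k : ℂ)) • ketbra (f k) (f k))
    (ρ : Matrix (Fin d) (Fin d) ℂ)
    (p : Fin d → ℝ) (ψ : Fin d → Fin d → ℂ) (hp : ∀ μ, 0 ≤ p μ) (hψ : IsONB ψ)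
    (hρ : ρ = ∑ μ, ((p μ : ℂ)) • ketbra (ψ μ) (ψ μ))
    (p' : Fin d → ℝ) (φ : Fin d → Fin d → ℂ) (hp' : ∀ ν, 0 ≤ p' ν) (hφ : IsONB φ)
    (hNρ : krausMap K ρ = ∑ ν, ((p' ν : ℂ)) • ketbra (φ ν) (φ ν)) :
    (∀ μ ν i j k l,
      tpmP K p ψ φ e f μ ν i j k l = (starRingEnd ℂ) (tpmP K p ψ φ e f μ ν j i l k)) ∧
    ((∀ μ, 0 < p μ) → (∀ ν, 0 < p' ν) → ∀ s : ℝ,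
      (∑ μ, ∑ ν, ∑ i, ∑ j, ∑ k, ∑ l,
        if (Real.log (p μ) - Real.log (p' ν)) -
            1/2 * Real.log (r i * r j / (r' k * r' l)) = s then
          tpmP K p ψ φ e f μ ν i j k l
        else 0).im = 0) :=
  tpm_quasiprobability_conjugation_symmetry_general K r e r' f p ψ p' φ
end
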